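/- arXiv:1804.07960 — 6 statements merged into one kernel-verified Lean document; each statement's English description precedes it below -/
import Mathlib

section
/- Let n ≥ 1 be an integer, let B be a commutative ℂ-algebra, and let C = B[x,y,z]/(xy − z^{n+1}). Then the C-linear map C → C³ sending c to (y·c, x·c, −(n+1)·z^n·c) is injective. Equivalently, if c ∈ C satisfies x·c = 0, y·c = 0 and z^n·c = 0, then c = 0. -/
open MvPolynomial

lemma key_div (n : ℕ) (B : Type) [CommRing B] (p q : MvPolynomial (Fin 3) B)
    (h : X 0 * p = (X 0 * X 1 - X 2 ^ (n + 1)) * q) :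
    (X 0 * X 1 - X 2 ^ (n + 1) : MvPolynomial (Fin 3) B) ∣ p := by
  set e := MvPolynomial.finSuccEquiv B 2
  have h1 : (1 : Fin 3) = (0 : Fin 2).succ := rfl
  have h2 : (2 : Fin 3) = (1 : Fin 2).succ := rfl
  have he : e (X 0 * X 1 - X 2 ^ (n + 1))
      = Polynomial.X * Polynomial.C (X 0) - Polynomial.C (X 1) ^ (n + 1) := by
    rw [map_sub, map_mul, map_pow, h1, h2]
    simp only [e, MvPolynomial.finSuccEquiv_X_zero, MvPolynomial.finSuccEquiv_X_succ]
  have hh := congrArg e h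
  rw [map_mul, map_mul, he, MvPolynomial.finSuccEquiv_X_zero] at hh
  set P := e p
  set Q := e q
  -- coeff 0 of both sides
  have hc0 : (X (1 : Fin 2) : MvPolynomial (Fin 2) B) ^ (n + 1) * Q.coeff 0 = 0 := by
    have := congrArg (fun r => Polynomial.coeff r 0) hh
    simp only [Polynomial.mul_coeff_zero, Polynomial.coeff_sub, Polynomial.coeff_X_zero,
      zero_mul, ← Polynomial.C_pow, Polynomial.coeff_C_zero, zero_sub, neg_mul] at this
    linear_combination this
  have hQ0 : Q.coeff 0 = 0 :=
    (MvPolynomial.isRegular_X_pow (n := (1 : Fin 2)) (n+1)).left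
      (by show X 1 ^ (n + 1) * Q.coeff 0 = X 1 ^ (n + 1) * 0; rw [hc0, mul_zero])
  have hQ : Q = Polynomial.X * Q.divX := by
    conv_lhs => rw [← Polynomial.X_mul_divX_add Q]
    rw [hQ0]; simp
  rw [hQ] at hh
  have hP : P = (Polynomial.X * Polynomial.C (X 0) - Polynomial.C (X 1) ^ (n + 1)) * Q.divX := by
    have h3 : Polynomial.X * P = Polynomial.X *
        ((Polynomial.X * Polynomial.C (X 0) - Polynomial.C (X 1) ^ (n + 1)) * Q.divX) := by
      rw [hh]; ring
    exact Polynomial.isRegular_X.left h3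
  refine ⟨e.symm Q.divX, ?_⟩
  apply e.injective
  rw [map_mul, he, AlgEquiv.apply_symm_apply]
  exact hP

lemma key_zero (n : ℕ) (B : Type) [CommRing B]
    (I : Ideal (MvPolynomial (Fin 3) B))
    (hI : I = Ideal.span {X 0 * X 1 - X 2 ^ (n + 1)})
    (c : MvPolynomial (Fin 3) B ⧸ I)
    (hc : Ideal.Quotient.mk I (X 0) * c = 0) : c = 0 := by
  obtain ⟨p, rfl⟩ := Ideal.Quotient.mk_surjective c
  rw [← map_mul, Ideal.Quotient.eq_zero_iff_mem, hI, Ideal.mem_span_singleton] at hc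
  obtain ⟨q, hq⟩ := hc
  rw [Ideal.Quotient.eq_zero_iff_mem, hI, Ideal.mem_span_singleton]
  exact key_div n B p q hq

/-- Let `n ≥ 1`, `B` a commutative `ℂ`-algebra, and
`C = B[x,y,z]/(xy − z^(n+1))`. The `C`-linear map `C → C³`,
`c ↦ (y·c, x·c, −(n+1)·z^n·c)`, is injective; equivalently, if `x·c = 0`, `y·c = 0` and
`z^n·c = 0`, then `c = 0`. -/
theorem An_conormal_map_injective
    (n : ℕ) (hn : 1 ≤ n)
    (B : Type) [CommRing B] [Algebra ℂ B]
    (I : Ideal (MvPolynomial (Fin 3) B))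
    (hI : I = Ideal.span {X 0 * X 1 - X 2 ^ (n + 1)}) :
    Function.Injective (fun c : MvPolynomial (Fin 3) B ⧸ I =>
      (Ideal.Quotient.mk I (X 1) * c, Ideal.Quotient.mk I (X 0) * c,
        -((n : MvPolynomial (Fin 3) B ⧸ I) + 1) * Ideal.Quotient.mk I (X 2) ^ n * c)) ∧
    ∀ c : MvPolynomial (Fin 3) B ⧸ I,
      Ideal.Quotient.mk I (X 0) * c = 0 → Ideal.Quotient.mk I (X 1) * c = 0 →
      Ideal.Quotient.mk I (X 2) ^ n * c = 0 → c = 0 := by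
  constructor
  · intro c1 c2 h
    have h2 : Ideal.Quotient.mk I (X 0) * c1 = Ideal.Quotient.mk I (X 0) * c2 :=
      congrArg (fun t => t.2.1) h
    have : Ideal.Quotient.mk I (X 0) * (c1 - c2) = 0 := by
      rw [mul_sub, h2, sub_self]
    have := key_zero n B I hI _ this
    exact sub_eq_zero.mp this
  · intro c h0 _ _
    exact key_zero n B I hI c h0
end

section
/- Let A be a commutative ring, let n ≥ 1 be an integer, and let f ∈ A be an invertible element. If in the polynomial ring A[x,y,z] the principal ideal generated by xy − z^{n+1} coincides with the principal ideal generated by xy − f·z^{n+1}, then f = 1. -/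
open MvPolynomial

/-- Let `A` be a commutative ring, `n ≥ 1`, and `f ∈ A` invertible. If in
`A[x,y,z]` the ideal generated by `xy − z^(n+1)` equals the ideal generated by
`xy − f·z^(n+1)`, then `f = 1`. -/
theorem unit_eq_one_of_span_eq
    (A : Type) [CommRing A] (n : ℕ) (hn : 1 ≤ n) (f : A) (hf : IsUnit f)
    (h : Ideal.span {(X 0 * X 1 - X 2 ^ (n + 1) : MvPolynomial (Fin 3) A)} =
      Ideal.span {(X 0 * X 1 - C f * X 2 ^ (n + 1) : MvPolynomial (Fin 3) A)}) :
    f = 1 := by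
  have hm : (X 0 * X 1 - C f * X 2 ^ (n + 1) : MvPolynomial (Fin 3) A) ∈
      Ideal.span {(X 0 * X 1 - X 2 ^ (n + 1) : MvPolynomial (Fin 3) A)} :=
    h ▸ Ideal.mem_span_singleton_self _
  obtain ⟨g, hg⟩ := Ideal.mem_span_singleton'.mp hm
  have h1 := congrArg (eval (fun _ => (1 : A))) hg
  simp [sub_eq_zero] at h1
  linear_combination h1
end

section
/- Let v₁, v₂, v₃ ∈ ℤ³ be affinely independent points (over ℝ), and suppose there is a linear form w ∈ Hom(ℤ³, ℤ) with ⟨w, vᵢ⟩ = 1 for i = 1, 2, 3. If the only points of ℤ³ lying in the triangle conv{v₁, v₂, v₃} ⊆ ℝ³ are v₁, v₂ and v₃ (i.e. the triangle is empty), then (v₁, v₂, v₃) is a ℤ-basis of ℤ³; equivalently, the 3×3 integer matrix with columns v₁, v₂, v₃ has determinant 1 or −1. -/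
/-!
If `v₁, v₂, v₃` were not a basis of `ℤ³`, some nonzero lattice point `q = ∑ cᵢ vᵢ` would lie in
the half-open parallelepiped `0 ≤ cᵢ < 1`. Its height `w q = ∑ cᵢ` is an integer in `(0, 3)`.
At height 1, `q` lies in the triangle; at height 2, so does `v₁ + v₂ + v₃ - q`, whose coefficients
are `1 - cᵢ`. Either way emptiness makes that point a vertex, which forces some `cᵢ = 1`.
-/

open Matrix

/-- The coordinatewise embedding `ℤ³ → ℝ³`. -/
def toR3 (v : Fin 3 → ℤ) : Fin 3 → ℝ := fun i => (v i : ℝ)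

theorem LinearMap.exists_extend_intCast {ι R : Type*} [Fintype ι] [CommRing R]
    (w : (ι → ℤ) →ₗ[ℤ] ℤ) :
    ∃ φ : (ι → R) →ₗ[R] R, ∀ v : ι → ℤ, φ (fun i => (v i : R)) = w v := by
  classical
  refine ⟨Fintype.linearCombination R fun i => (w fun j => if i = j then 1 else 0 : R),
    fun v => ?_⟩
  rw [Fintype.linearCombination_apply, w.pi_apply_eq_sum_univ v]
  simp

theorem AffineIndependent.linearIndependent_of_forall_eq_one {k V ι : Type*} [Ring k]
    [AddCommGroup V] [Module k V] {p : ι → V} (hp : AffineIndependent k p) (φ : V →ₗ[k] k)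
    (hφ : ∀ i, φ (p i) = 1) : LinearIndependent k p := by
  rw [linearIndependent_iff']
  intro s g hg
  refine hp.eq_zero_of_sum_eq_zero ?_ hg
  simpa [hφ] using congrArg φ hg

theorem exists_intCast_eq_fract_combination {ι : Type*} [Fintype ι] [DecidableEq ι]
    {b : ι → ι → ℤ} (hb : LinearIndependent ℝ fun i j => (b i j : ℝ))
    (hdet : ¬ IsUnit (Matrix.of b).det) :
    ∃ c : ι → ℝ, c ≠ 0 ∧ (∀ i, 0 ≤ c i ∧ c i < 1) ∧
      ∃ q : ι → ℤ, ∑ i, c i • (fun j => (b i j : ℝ)) = fun j => (q j : ℝ) := by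
  set A := Matrix.of b
  have hcomb (c : ι → ℝ) : ∑ i, c i • (fun j => (b i j : ℝ)) = c ᵥ* A.map Int.cast := by
    rw [vecMul_eq_sum]; rfl
  have hcast (z : ι → ℤ) : (fun i => (z i : ℝ)) ᵥ* A.map Int.cast = fun j => ((z ᵥ* A) j : ℝ) :=
    funext fun j => ((Int.castRingHom ℝ).map_vecMul A z j).symm
  obtain ⟨p, hp⟩ : ∃ p, ∀ z, z ᵥ* A ≠ p := by
    rw [← isUnit_iff_isUnit_det, ← vecMul_surjective_iff_isUnit] at hdet
    simpa [Function.Surjective] using hdet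
  obtain ⟨a, ha : a ᵥ* A.map Int.cast = fun j => (p j : ℝ)⟩ := vecMul_surjective_iff_isUnit.mpr
    (linearIndependent_rows_iff_isUnit.mp hb) fun j => (p j : ℝ)
  refine ⟨fun i => Int.fract (a i), fun hfract => hp (fun i => ⌊a i⌋) ?_,
    fun i => ⟨Int.fract_nonneg _, Int.fract_lt_one _⟩, p - (fun i => ⌊a i⌋) ᵥ* A, ?_⟩
  · have hint : a = fun i => (⌊a i⌋ : ℝ) :=
      funext fun i => sub_eq_zero.mp (congrFun hfract i)
    funext j
    exact_mod_cast congrFun ((hcast _).symm.trans (hint ▸ ha)) j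
  · have hc : (fun i => Int.fract (a i)) = a - fun i => (⌊a i⌋ : ℝ) := rfl
    rw [hcomb, hc, sub_vecMul, ha, hcast]
    funext j
    simp

theorem AffineIndependent.exists_eq_single_of_sum_smul_mem {𝕜 ι V : Type*} [Field 𝕜]
    [LinearOrder 𝕜] [IsStrictOrderedRing 𝕜] [Fintype ι] [DecidableEq ι] [AddCommGroup V]
    [Module 𝕜 V] {x : ι → V} (hx : AffineIndependent 𝕜 x) {S : Set V}
    (hS : S ∩ convexHull 𝕜 (Set.range x) ⊆ Set.range x) {c : ι → 𝕜} (hc₀ : ∀ i, 0 ≤ c i)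
    (hc₁ : ∑ i, c i = 1) (hmem : ∑ i, c i • x i ∈ S) : ∃ j, c = Pi.single j 1 := by
  obtain ⟨j, hj⟩ := hS ⟨hmem, (convex_convexHull 𝕜 _).sum_mem (fun i _ => hc₀ i) hc₁
    fun i _ => subset_convexHull 𝕜 _ (Set.mem_range_self i)⟩
  refine ⟨j, funext fun i => hx.eq_of_sum_eq_sum (s := Finset.univ) ?_ ?_ i (Finset.mem_univ i)⟩
  · simp [hc₁]
  · simp [hj]

theorem AffineIndependent.eq_zero_of_sum_smul_mem {V : Type*} [AddCommGroup V] [Module ℝ V]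
    {x : Fin 3 → V} (hx : AffineIndependent ℝ x) (L : AddSubgroup V) (hxL : ∀ i, x i ∈ L)
    (hempty : (L : Set V) ∩ convexHull ℝ (Set.range x) ⊆ Set.range x) (φ : V →ₗ[ℝ] ℝ)
    (hφx : ∀ i, φ (x i) = 1) (hφL : ∀ v ∈ L, ∃ n : ℤ, φ v = n) {c : Fin 3 → ℝ}
    (hc : ∀ i, 0 ≤ c i ∧ c i < 1) (hmem : ∑ i, c i • x i ∈ L) : c = 0 := by
  by_contra hc_ne
  obtain ⟨n, hn⟩ := hφL _ hmem
  have hsum : ∑ i, c i = n := by simpa [hφx] using hn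
  have hpos : 0 < ∑ i, c i := by
    obtain ⟨i, hi⟩ := Function.ne_iff.mp hc_ne
    exact Finset.sum_pos' (fun i _ => (hc i).1) ⟨i, Finset.mem_univ i, (hc i).1.lt_of_ne' hi⟩
  have hlt : ∑ i, c i < 3 := by
    simpa using Finset.sum_lt_sum_of_nonempty Finset.univ_nonempty fun i _ => (hc i).2
  obtain ⟨k, hk⟩ : ∃ k, c k = 1 := by
    have hn : n = 1 ∨ n = 2 := by
      rw [hsum] at hpos hlt
      have : 0 < n := by exact_mod_cast hpos
      have : n < 3 := by exact_mod_cast hlt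
      omega
    rcases hn with rfl | rfl
    · obtain ⟨j, hj⟩ := hx.exists_eq_single_of_sum_smul_mem hempty (fun i => (hc i).1)
        (by simpa using hsum) hmem
      exact ⟨j, by simp [hj]⟩
    · obtain ⟨j, hj⟩ := hx.exists_eq_single_of_sum_smul_mem (c := 1 - c) hempty
        (fun i => by simp [(hc i).2.le]) (by simp [Finset.sum_sub_distrib, hsum]; norm_num)
        (by
          simp only [Pi.sub_apply, Pi.one_apply, sub_smul, one_smul, Finset.sum_sub_distrib]
          exact L.sub_mem (L.sum_mem fun i _ => hxL i) hmem)
      obtain ⟨k, hk⟩ := exists_ne j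
      have hck := congrFun hj k
      simp only [Pi.sub_apply, Pi.one_apply, Pi.single_eq_of_ne hk] at hck
      exact ⟨k, by linarith⟩
  exact (hc k).2.ne hk

/-- An empty lattice triangle in `ℤ³` lying at height `1` with respect to the
origin has its three vertices forming a `ℤ`-basis of `ℤ³`; equivalently the matrix with columns
`v₁, v₂, v₃` has determinant `±1`. -/
theorem empty_triangle_at_height_one_is_basis
    (v₁ v₂ v₃ : Fin 3 → ℤ)
    (haff : AffineIndependent ℝ ![toR3 v₁, toR3 v₂, toR3 v₃])
    (w : (Fin 3 → ℤ) →ₗ[ℤ] ℤ)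
    (hw₁ : w v₁ = 1) (hw₂ : w v₂ = 1) (hw₃ : w v₃ = 1)
    (hempty : ∀ p : Fin 3 → ℤ,
      toR3 p ∈ convexHull ℝ {toR3 v₁, toR3 v₂, toR3 v₃} → p = v₁ ∨ p = v₂ ∨ p = v₃) :
    (Matrix.of ![v₁, v₂, v₃])ᵀ.det = 1 ∨ (Matrix.of ![v₁, v₂, v₃])ᵀ.det = -1 := by
  set b := ![v₁, v₂, v₃]
  set x := fun i => toR3 (b i)
  have hx : AffineIndependent ℝ x := by
    convert haff using 1; ext i; fin_cases i <;> rfl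
  obtain ⟨φ, hφ⟩ := w.exists_extend_intCast (R := ℝ)
  have hφx : ∀ i, φ (x i) = 1 := by
    intro i
    rw [show φ (x i) = w (b i) from hφ (b i)]
    fin_cases i <;> simp [b, hw₁, hw₂, hw₃]
  set L := (AddMonoidHom.compLeft (Int.castAddHom ℝ) (Fin 3)).range
  have hL : (L : Set (Fin 3 → ℝ)) ∩ convexHull ℝ (Set.range x) ⊆ Set.range x := by
    have hrange : Set.range x = {toR3 v₁, toR3 v₂, toR3 v₃} := by
      ext y
      simp [x, b, Fin.exists_fin_succ, eq_comm]
    rintro _ ⟨⟨p, rfl⟩, hp⟩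
    change toR3 p ∈ _ at hp ⊢
    rw [hrange] at hp ⊢
    rcases hempty p hp with rfl | rfl | rfl <;> simp
  rw [← Int.isUnit_iff, det_transpose]
  by_contra hdet
  obtain ⟨c, hc_ne, hc, q, hq⟩ :=
    exists_intCast_eq_fract_combination (hx.linearIndependent_of_forall_eq_one φ hφx) hdet
  exact hc_ne (hx.eq_zero_of_sum_smul_mem L (fun i => ⟨b i, rfl⟩) hL φ hφx
    (by rintro _ ⟨v, rfl⟩; exact ⟨w v, hφ v⟩) hc ⟨q, hq.symm⟩)
end

section
/- Let n ≥ 1 be an integer and let T₀ = conv{ρ₀, ρ_u, ρ_v} and T₁ = conv{ρ₁, ρ_u, ρ_v} be two adjacent A_n-triangles in ℤ³. Then there exist a matrix g ∈ GL₃(ℤ) and integers a, b ∈ ℤ such that g·ρ₀ = (a, b, −1), g·ρ₁ = (0, 0, 1), g·ρ_u = (1, 0, 0) and g·ρ_v = (−n, n+1, 0). -/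
open Matrix

/-- The lattice length of the segment between two lattice points `p, q ∈ ℤ³`:
the gcd of the coordinates of `q − p`. -/
def latticeLength (p q : Fin 3 → ℤ) : ℕ :=
  Int.gcd (q 0 - p 0) ((Int.gcd (q 1 - p 1) (q 2 - p 2) : ℕ) : ℤ)

/-- The relative interior of the triangle with vertices `a, b, c ∈ ℝ³`: points with all
barycentric coordinates (strictly) positive. -/
def relIntTriangle (a b c : Fin 3 → ℝ) : Set (Fin 3 → ℝ) :=
  {x | ∃ t₁ t₂ t₃ : ℝ, 0 < t₁ ∧ 0 < t₂ ∧ 0 < t₃ ∧ t₁ + t₂ + t₃ = 1 ∧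
    x = t₁ • a + t₂ • b + t₃ • c}

/-- An `Aₙ`-triangle in `ℤ³`: three affinely independent lattice points such that (1) the
relative interior of their convex hull contains no lattice point, (2) the edges have lattice
lengths `1`, `1`, `n+1`, (3) some linear form `w ∈ Hom(ℤ³, ℤ)` takes the value `1` on all
three vertices. -/
structure IsAnTriangle (n : ℕ) (v₁ v₂ v₃ : Fin 3 → ℤ) : Prop where
  affInd : AffineIndependent ℝ ![toR3 v₁, toR3 v₂, toR3 v₃]
  no_interior_point : ∀ p : Fin 3 → ℤ, toR3 p ∉ relIntTriangle (toR3 v₁) (toR3 v₂) (toR3 v₃)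
  edge_lengths : ({latticeLength v₁ v₂, latticeLength v₂ v₃, latticeLength v₁ v₃} : Multiset ℕ)
    = {1, 1, n + 1}
  height_one : ∃ w : Fin 3 → ℤ, w ⬝ᵥ v₁ = 1 ∧ w ⬝ᵥ v₂ = 1 ∧ w ⬝ᵥ v₃ = 1

/-- Two adjacent `Aₙ`-triangles `T₀ = conv{ρ₀, ρᵤ, ρᵥ}` and `T₁ = conv{ρ₁, ρᵤ, ρᵥ}` in `ℤ³`:
both are `Aₙ`-triangles, the common edge `conv{ρᵤ, ρᵥ}` is the edge of lattice length `n+1`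
of both, and `ρ₀`, `ρ₁` lie in the two different open half-spaces of `ℝ³` determined by the
plane spanned by `ρᵤ` and `ρᵥ`. -/
structure AreAdjacentAnTriangles (n : ℕ) (ρ₀ ρ₁ ρu ρv : Fin 3 → ℤ) : Prop where
  t₀ : IsAnTriangle n ρ₀ ρu ρv
  t₁ : IsAnTriangle n ρ₁ ρu ρv
  common_edge_length : latticeLength ρu ρv = n + 1
  opposite_sides : ∃ φ : (Fin 3 → ℝ) →ₗ[ℝ] ℝ,
    φ (toR3 ρu) = 0 ∧ φ (toR3 ρv) = 0 ∧ φ (toR3 ρ₀) < 0 ∧ 0 < φ (toR3 ρ₁)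

/-!
After a `GL₃(ℤ)`-change of coordinates, the height-one form of `T₁` puts the common edge in the
normal position `ρᵤ = (1, 0, 0)`, `ρᵥ = (-n, n + 1, 0)`. For an `Aₙ`-triangle with this long edge,
the apex `x` has `x₂ = ±1`: the plane through the triangle is a lattice plane in which the triangle
becomes `(0, 0), (n + 1, 0), (x₀ + n, x₂)` with primitive short edges, and if `|x₂| ≥ 2` the row
at height one contains an interior lattice point. Since `ρ₀` and `ρ₁` lie on opposite sides of the
plane `x₂ = 0`, their last coordinates are `∓1`, and a shear fixing that plane sends `ρ₁` to `e₃`.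
-/

section Unimodular

variable {g : Matrix (Fin 3) (Fin 3) ℤ}

theorem toR3_mulVec (x : Fin 3 → ℤ) :
    toR3 (g *ᵥ x) = g.map (Int.cast : ℤ → ℝ) *ᵥ toR3 x :=
  funext fun i => (Int.castRingHom ℝ).map_mulVec g x i

theorem inv_mulVec_mulVec {ι R : Type*} [Fintype ι] [DecidableEq ι] [CommRing R]
    {A : Matrix ι ι R} (hA : IsUnit A.det) (x : ι → R) : A⁻¹ *ᵥ (A *ᵥ x) = x := by
  rw [mulVec_mulVec, nonsing_inv_mul A hA, one_mulVec]

theorem dvd_latticeLength_iff {p q : Fin 3 → ℤ} {d : ℤ} :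
    d ∣ (latticeLength p q : ℤ) ↔ ∀ i, d ∣ q i - p i := by
  refine ⟨fun h i => ?_, fun h => Int.dvd_coe_gcd (h 0) (Int.dvd_coe_gcd (h 1) (h 2))⟩
  have h₁₂ := h.trans (Int.gcd_dvd_right _ _)
  fin_cases i
  exacts [h.trans (Int.gcd_dvd_left _ _), h₁₂.trans (Int.gcd_dvd_left _ _),
    h₁₂.trans (Int.gcd_dvd_right _ _)]

theorem dvd_mulVec_of_forall_dvd {ι κ R : Type*} [Fintype κ] [CommRing R] {d : R}
    {x : κ → R} (hx : ∀ j, d ∣ x j) (A : Matrix ι κ R) (i : ι) : d ∣ (A *ᵥ x) i :=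
  Finset.dvd_sum (s := Finset.univ) (f := fun j => A i j * x j) fun j _ => (hx j).mul_left _

theorem latticeLength_mulVec (hg : IsUnit g.det) (p q : Fin 3 → ℤ) :
    latticeLength (g *ᵥ p) (g *ᵥ q) = latticeLength p q := by
  have key : ∀ (A : Matrix (Fin 3) (Fin 3) ℤ) (p q : Fin 3 → ℤ),
      latticeLength p q ∣ latticeLength (A *ᵥ p) (A *ᵥ q) := fun A p q => by
    refine Int.natCast_dvd_natCast.mp (dvd_latticeLength_iff.mpr fun i => ?_)
    rw [← Pi.sub_apply, ← mulVec_sub]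
    exact dvd_mulVec_of_forall_dvd (fun j => dvd_latticeLength_iff.mp dvd_rfl j) A i
  refine Nat.dvd_antisymm ?_ (key g p q)
  simpa only [inv_mulVec_mulVec hg] using key g⁻¹ (g *ᵥ p) (g *ᵥ q)

theorem mulVec_mem_relIntTriangle {a b c x : Fin 3 → ℤ}
    (hx : toR3 x ∈ relIntTriangle (toR3 a) (toR3 b) (toR3 c)) :
    toR3 (g *ᵥ x) ∈ relIntTriangle (toR3 (g *ᵥ a)) (toR3 (g *ᵥ b)) (toR3 (g *ᵥ c)) := by
  obtain ⟨t₁, t₂, t₃, h₁, h₂, h₃, hsum, hx⟩ := hx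
  refine ⟨t₁, t₂, t₃, h₁, h₂, h₃, hsum, ?_⟩
  simp only [toR3_mulVec, hx, mulVec_add, mulVec_smul]

theorem exists_dotProduct_mulVec_eq {ι R : Type*} [Fintype ι] [DecidableEq ι] [CommRing R]
    {A : Matrix ι ι R} (hA : IsUnit A.det) (w : ι → R) :
    ∃ w' : ι → R, ∀ x, w' ⬝ᵥ (A *ᵥ x) = w ⬝ᵥ x :=
  ⟨w ᵥ* A⁻¹, fun x => by rw [dotProduct_mulVec, vecMul_vecMul, nonsing_inv_mul A hA, vecMul_one]⟩

theorem affineIndependent_mulVec (hg : IsUnit g.det) {v₁ v₂ v₃ : Fin 3 → ℤ}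
    (h : AffineIndependent ℝ ![toR3 v₁, toR3 v₂, toR3 v₃]) :
    AffineIndependent ℝ ![toR3 (g *ᵥ v₁), toR3 (g *ᵥ v₂), toR3 (g *ᵥ v₃)] := by
  have hinj : Function.Injective (g.map (Int.cast : ℤ → ℝ)).mulVec := by
    refine mulVec_injective_of_det_ne_zero ?_
    have hdet := (Int.castRingHom ℝ).map_det g
    rw [RingHom.mapMatrix_apply, Int.coe_castRingHom] at hdet
    rw [← hdet, Int.cast_ne_zero]
    exact hg.ne_zero
  convert h.map' (Matrix.toLin' (g.map (Int.cast : ℤ → ℝ))).toAffineMap hinj using 1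
  · rfl
  · funext i
    fin_cases i <;> simp [toR3_mulVec]

theorem IsAnTriangle.mulVec {n : ℕ} {v₁ v₂ v₃ : Fin 3 → ℤ} (h : IsAnTriangle n v₁ v₂ v₃)
    (hg : IsUnit g.det) : IsAnTriangle n (g *ᵥ v₁) (g *ᵥ v₂) (g *ᵥ v₃) where
  affInd := affineIndependent_mulVec hg h.affInd
  no_interior_point p hp := by
    have := mulVec_mem_relIntTriangle (g := g⁻¹) hp
    simp only [inv_mulVec_mulVec hg] at this
    exact h.no_interior_point _ this
  edge_lengths := by simpa only [latticeLength_mulVec hg] using h.edge_lengths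
  height_one := by
    obtain ⟨w, h₁, h₂, h₃⟩ := h.height_one
    obtain ⟨w', hw'⟩ := exists_dotProduct_mulVec_eq hg w
    exact ⟨w', by rwa [hw'], by rwa [hw'], by rwa [hw']⟩

theorem AreAdjacentAnTriangles.mulVec {n : ℕ} {ρ₀ ρ₁ ρu ρv : Fin 3 → ℤ}
    (h : AreAdjacentAnTriangles n ρ₀ ρ₁ ρu ρv) (hg : IsUnit g.det) :
    AreAdjacentAnTriangles n (g *ᵥ ρ₀) (g *ᵥ ρ₁) (g *ᵥ ρu) (g *ᵥ ρv) where
  t₀ := h.t₀.mulVec hg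
  t₁ := h.t₁.mulVec hg
  common_edge_length := by rw [latticeLength_mulVec hg, h.common_edge_length]
  opposite_sides := by
    obtain ⟨φ, hu, hv, h₀, h₁⟩ := h.opposite_sides
    have hφ : ∀ x, (φ ∘ₗ Matrix.toLin' (g⁻¹.map (Int.cast : ℤ → ℝ))) (toR3 (g *ᵥ x)) =
        φ (toR3 x) := fun x => by
      rw [LinearMap.comp_apply, toLin'_apply, ← toR3_mulVec, inv_mulVec_mulVec hg]
    exact ⟨_, by rwa [hφ], by rwa [hφ], by rwa [hφ], by rwa [hφ]⟩

end Unimodular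

theorem exists_det_eq_one_mulVec_eq_gcd (a b : ℤ) :
    ∃ h : Matrix (Fin 2) (Fin 2) ℤ, h.det = 1 ∧ h *ᵥ ![a, b] = ![(Int.gcd a b : ℤ), 0] := by
  rcases Nat.eq_zero_or_pos (Int.gcd a b) with hd | hd
  · obtain ⟨rfl, rfl⟩ := Int.gcd_eq_zero_iff.mp hd
    exact ⟨1, det_one, by simp⟩
  obtain ⟨u, v, huv⟩ := Int.isCoprime_iff_gcd_eq_one.mpr (Int.gcd_div_gcd_div_gcd hd)
  have ha := Int.mul_ediv_cancel' (Int.gcd_dvd_left a b)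
  have hb := Int.mul_ediv_cancel' (Int.gcd_dvd_right a b)
  refine ⟨!![u, v; -(b / Int.gcd a b), a / Int.gcd a b], by simp [det_fin_two_of, huv], ?_⟩
  ext i
  fin_cases i <;>
    simp only [mulVec, dotProduct, Fin.sum_univ_two, Fin.isValue, Fin.zero_eta, Fin.mk_one,
      of_apply, cons_val', cons_val_zero, cons_val_fin_one, cons_val_one]
  · linear_combination (Int.gcd a b : ℤ) * huv - u * ha - v * hb
  · linear_combination b / Int.gcd a b * ha - a / Int.gcd a b * hb

def blockUpperLeft (h : Matrix (Fin 2) (Fin 2) ℤ) : Matrix (Fin 3) (Fin 3) ℤ :=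
  !![h 0 0, h 0 1, 0; h 1 0, h 1 1, 0; 0, 0, 1]

def blockLowerRight (h : Matrix (Fin 2) (Fin 2) ℤ) : Matrix (Fin 3) (Fin 3) ℤ :=
  !![1, 0, 0; 0, h 0 0, h 0 1; 0, h 1 0, h 1 1]

theorem det_blockUpperLeft (h : Matrix (Fin 2) (Fin 2) ℤ) : (blockUpperLeft h).det = h.det := by
  simp [blockUpperLeft, det_fin_three, det_fin_two]

theorem det_blockLowerRight (h : Matrix (Fin 2) (Fin 2) ℤ) : (blockLowerRight h).det = h.det := by
  simp [blockLowerRight, det_fin_three, det_fin_two]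

theorem blockUpperLeft_mulVec (h : Matrix (Fin 2) (Fin 2) ℤ) (x : Fin 3 → ℤ) :
    blockUpperLeft h *ᵥ x = ![(h *ᵥ ![x 0, x 1]) 0, (h *ᵥ ![x 0, x 1]) 1, x 2] := by
  ext i
  fin_cases i <;> simp [blockUpperLeft, mulVec, dotProduct, Fin.sum_univ_three, Fin.sum_univ_two]

theorem blockLowerRight_mulVec (h : Matrix (Fin 2) (Fin 2) ℤ) (x : Fin 3 → ℤ) :
    blockLowerRight h *ᵥ x = ![x 0, (h *ᵥ ![x 1, x 2]) 0, (h *ᵥ ![x 1, x 2]) 1] := by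
  ext i
  fin_cases i <;> simp [blockLowerRight, mulVec, dotProduct, Fin.sum_univ_three, Fin.sum_univ_two]

theorem exists_det_eq_one_mulVec_eq_latticeLength (p q : Fin 3 → ℤ) :
    ∃ g : Matrix (Fin 3) (Fin 3) ℤ, g.det = 1 ∧
      g *ᵥ (q - p) = ![(latticeLength p q : ℤ), 0, 0] := by
  obtain ⟨h₁₂, hdet₁₂, h₁₂x⟩ := exists_det_eq_one_mulVec_eq_gcd ((q - p) 1) ((q - p) 2)
  obtain ⟨h₀₁, hdet₀₁, h₀₁x⟩ :=
    exists_det_eq_one_mulVec_eq_gcd ((q - p) 0) (Int.gcd ((q - p) 1) ((q - p) 2))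
  refine ⟨blockUpperLeft h₀₁ * blockLowerRight h₁₂, ?_, ?_⟩
  · rw [det_mul, det_blockUpperLeft, det_blockLowerRight, hdet₀₁, hdet₁₂, one_mul]
  · rw [← mulVec_mulVec, blockLowerRight_mulVec, h₁₂x, blockUpperLeft_mulVec]
    simp only [cons_val_zero, cons_val_one, cons_val_two, head_cons, tail_cons, h₀₁x]
    rfl

theorem exists_mulVec_eq_normalEdge {n : ℕ} {p q w : Fin 3 → ℤ}
    (hpq : latticeLength p q = n + 1) (hp : w ⬝ᵥ p = 1) (hq : w ⬝ᵥ q = 1) :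
    ∃ g : Matrix (Fin 3) (Fin 3) ℤ, IsUnit g.det ∧
      g *ᵥ p = ![1, 0, 0] ∧ g *ᵥ q = ![-(n : ℤ), n + 1, 0] := by
  obtain ⟨g₁, hg₁, hg₁pq⟩ := exists_det_eq_one_mulVec_eq_latticeLength p q
  rw [hpq] at hg₁pq
  obtain ⟨w', hw'⟩ := exists_dotProduct_mulVec_eq (hg₁ ▸ isUnit_one) w
  obtain ⟨y, hy⟩ : ∃ y, g₁ *ᵥ p = y := ⟨_, rfl⟩
  have hw'₀ : w' 0 = 0 := by
    have h := hw' (q - p)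
    rw [hg₁pq, dotProduct_sub, hp, hq] at h
    simp only [dotProduct, Fin.sum_univ_three, Fin.isValue, cons_val_zero, cons_val_one, cons_val,
      mul_zero, add_zero, sub_self, mul_eq_zero] at h
    exact h.resolve_right (by omega)
  have hy₁₂ : Int.gcd (y 1) (y 2) = 1 := by
    refine Int.isCoprime_iff_gcd_eq_one.mp ⟨w' 1, w' 2, ?_⟩
    have h := hw' p
    rw [hp, hy] at h
    simpa [dotProduct, Fin.sum_univ_three, hw'₀] using h
  obtain ⟨h, hdet, hhy⟩ := exists_det_eq_one_mulVec_eq_gcd (y 1) (y 2)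
  rw [hy₁₂] at hhy
  have hp' : blockLowerRight h *ᵥ (g₁ *ᵥ p) = ![y 0, 1, 0] := by
    rw [hy, blockLowerRight_mulVec, hhy]; rfl
  have hpq' : blockLowerRight h *ᵥ (g₁ *ᵥ (q - p)) = ![(n : ℤ) + 1, 0, 0] := by
    rw [hg₁pq, blockLowerRight_mulVec]; simp [mulVec, dotProduct]
  -- `L` sends `(y₀, 1, 0) ↦ (1, 0, 0)` and `(1, 0, 0) ↦ (-1, 1, 0)`.
  let L : Matrix (Fin 3) (Fin 3) ℤ := !![-1, 1 + y 0, 0; 1, -y 0, 0; 0, 0, 1]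
  have hL : L.det = -1 := by simp [L, det_fin_three]
  refine ⟨L * blockLowerRight h * g₁, ?_, ?_, ?_⟩
  · rw [det_mul, det_mul, det_blockLowerRight, hdet, hg₁, hL]; decide
  · rw [← mulVec_mulVec, ← mulVec_mulVec, hp']
    ext i; fin_cases i <;> simp [L, mulVec, dotProduct, Fin.sum_univ_three]
  · rw [← add_sub_cancel p q, ← mulVec_mulVec, ← mulVec_mulVec, mulVec_add, mulVec_add, hp',
      hpq']
    ext i
    fin_cases i <;>
      simp only [L, mulVec, dotProduct, Fin.sum_univ_three, Fin.isValue, Fin.zero_eta, Fin.mk_one,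
        Fin.reduceFinMk, of_apply, cons_val', cons_val_fin_one, cons_val_zero, cons_val_one,
        cons_val, Pi.add_apply, Int.reduceNeg, neg_mul, one_mul, zero_mul, mul_one, mul_zero,
        add_zero, neg_add_rev, add_neg_cancel_comm]
    ring

theorem IsAnTriangle.latticeLength_eq_one {n : ℕ} {v₁ v₂ v₃ : Fin 3 → ℤ}
    (h : IsAnTriangle n v₁ v₂ v₃) (h₂₃ : latticeLength v₂ v₃ = n + 1) :
    latticeLength v₁ v₂ = 1 ∧ latticeLength v₁ v₃ = 1 := by
  have hm := h.edge_lengths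
  simp only [h₂₃, Multiset.insert_eq_cons, ← Multiset.cons_zero] at hm
  rw [Multiset.cons_swap, Multiset.cons_swap 1 (n + 1), Multiset.cons_swap 1 (n + 1),
    Multiset.cons_inj_right] at hm
  have h₁₂ : latticeLength v₁ v₂ ∈ (1 ::ₘ 1 ::ₘ 0 : Multiset ℕ) := hm ▸ by simp
  have h₁₃ : latticeLength v₁ v₃ ∈ (1 ::ₘ 1 ::ₘ 0 : Multiset ℕ) := hm ▸ by simp
  simp only [Multiset.mem_cons, or_self, Multiset.notMem_zero, or_false] at h₁₂ h₁₃
  exact ⟨h₁₂, h₁₃⟩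

theorem isCoprime_of_latticeLength_eq_one {p q : Fin 3 → ℤ} (h : latticeLength p q = 1) {s : ℤ}
    (hs : (q 0 - p 0) + (q 1 - p 1) + s * (q 2 - p 2) = 0) :
    IsCoprime (q 0 - p 0) (q 2 - p 2) := by
  rw [Int.isCoprime_iff_gcd_eq_one]
  have h₀ := Int.gcd_dvd_left (q 0 - p 0) (q 2 - p 2)
  have h₂ := Int.gcd_dvd_right (q 0 - p 0) (q 2 - p 2)
  have hdvd : (Int.gcd (q 0 - p 0) (q 2 - p 2) : ℤ) ∣ latticeLength p q := by
    refine dvd_latticeLength_iff.mpr fun i => ?_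
    fin_cases i
    · exact h₀
    · show _ ∣ q 1 - p 1
      rw [show q 1 - p 1 = -(q 0 - p 0) - s * (q 2 - p 2) by linarith]
      exact (h₀.neg_right).sub (h₂.mul_left s)
    · exact h₂
  rw [h] at hdvd
  exact Nat.dvd_one.mp (Int.natCast_dvd_natCast.mp hdvd)

theorem exists_interior_latticePoint_of_two_le {n : ℕ} {y z : ℤ} (hz : 2 ≤ z)
    (hy : IsCoprime y z) (hy' : IsCoprime (y - (n + 1)) z) :
    ∃ s : ℤ, ∃ a b : ℝ, 0 < a ∧ 0 < b ∧ a + b < 1 ∧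
      (s : ℝ) = a * (n + 1) + b * y ∧ 1 = b * z := by
  have hndvd : ∀ m, IsCoprime m z → ¬z ∣ m := fun m hm hzm => by
    have := Int.isUnit_iff.mp (hm.isUnit_of_dvd' hzm dvd_rfl)
    omega
  have hdiv := Int.mul_ediv_add_emod y z
  have hr : 0 < y % z := by
    refine (Int.emod_nonneg y (by omega)).lt_of_ne fun h => hndvd y hy ?_
    exact Int.dvd_of_emod_eq_zero h.symm
  have hrz : y % z < z := Int.emod_lt_of_pos y (by omega)
  have hnr : 2 ≤ n + y % z := by
    by_contra hlt
    obtain ⟨rfl, hr1⟩ : n = 0 ∧ y % z = 1 := by omega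
    exact hndvd _ hy' ⟨y / z, by push_cast; linarith⟩
  set r := y % z
  have hzR : (2 : ℝ) ≤ z := by exact_mod_cast hz
  have hrR : (0 : ℝ) < r := by exact_mod_cast hr
  have hrzR : (r : ℝ) < z := by exact_mod_cast hrz
  have hnrR : (2 : ℝ) ≤ n + r := by exact_mod_cast hnr
  have hdivR : (z : ℝ) * (y / z : ℤ) + r = y := by exact_mod_cast hdiv
  -- the lattice point `(⌊y / z⌋ + 1, 1)` on the first row above the base
  refine ⟨y / z + 1, (z - r) / (z * (n + 1)), 1 / z, by positivity, by positivity, ?_, ?_, ?_⟩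
  · have hn : (0 : ℝ) ≤ n := n.cast_nonneg
    have key : (z : ℝ) - r + (n + 1) < z * (n + 1) := by nlinarith
    rw [div_add_div _ _ (by positivity) (by positivity), div_lt_one (by positivity)]
    nlinarith
  · push_cast
    field_simp
    linear_combination hdivR
  · field_simp

theorem exists_interior_latticePoint {n : ℕ} {y z : ℤ} (hy : IsCoprime y z)
    (hy' : IsCoprime (y - (n + 1)) z) (hz : ¬IsUnit z) :
    ∃ s t : ℤ, ∃ a b : ℝ, 0 < a ∧ 0 < b ∧ a + b < 1 ∧
      (s : ℝ) = a * (n + 1) + b * y ∧ (t : ℝ) = b * z := by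
  rw [Int.isUnit_iff] at hz
  rcases lt_trichotomy z 0 with hneg | rfl | hpos
  · obtain ⟨s, a, b, ha, hb, hab, hs, ht⟩ :=
      exists_interior_latticePoint_of_two_le (by omega) hy.neg_right hy'.neg_right
    exact ⟨s, -1, a, b, ha, hb, hab, hs, by push_cast at ht ⊢; linarith⟩
  · rw [isCoprime_zero_right, Int.isUnit_iff] at hy hy'
    -- the degenerate triangle `(0, 0), (2, 0), (1, 0)`
    obtain ⟨rfl, rfl⟩ : y = 1 ∧ n = 1 := by omega
    exact ⟨1, 0, 1 / 4, 1 / 2, by norm_num⟩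
  · obtain ⟨s, a, b, ha, hb, hab, hs, ht⟩ :=
      exists_interior_latticePoint_of_two_le (by omega) hy hy'
    exact ⟨s, 1, a, b, ha, hb, hab, hs, by exact_mod_cast ht⟩

theorem latticeLength_normalEdge (n : ℕ) :
    latticeLength ![1, 0, 0] ![-(n : ℤ), n + 1, 0] = n + 1 := by
  simp only [latticeLength, Fin.isValue, cons_val_zero, cons_val_one, cons_val, sub_zero, sub_self,
    Int.gcd_zero, Nat.cast_natAbs, Int.cast_abs, Int.cast_add, Int.cast_natCast, Int.cast_one]
  rw [show (-(n : ℤ) - 1) = -(n + 1) by ring, Int.neg_gcd, abs_of_nonneg (by positivity),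
    Int.gcd_self]
  omega

theorem IsAnTriangle.exists_apex_add_add_mul_eq_one {n : ℕ} {x : Fin 3 → ℤ}
    (h : IsAnTriangle n x ![1, 0, 0] ![-(n : ℤ), n + 1, 0]) : ∃ c : ℤ, x 0 + x 1 + c * x 2 = 1 := by
  obtain ⟨W, hWx, hWu, hWv⟩ := h.height_one
  simp only [dotProduct, Fin.sum_univ_three, Fin.isValue, cons_val_zero, cons_val_one, cons_val,
    mul_one, mul_zero, add_zero, mul_neg] at hWx hWu hWv
  have hW₁ : W 1 = 1 := by
    have : (W 1 - 1) * (n + 1) = 0 := by linear_combination hWv + n * hWu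
    exact sub_eq_zero.mp ((mul_eq_zero.mp this).resolve_right (by omega))
  exact ⟨W 2, by rwa [hWu, hW₁, one_mul, one_mul] at hWx⟩

theorem IsAnTriangle.isUnit_apex {n : ℕ} {x : Fin 3 → ℤ}
    (h : IsAnTriangle n x ![1, 0, 0] ![-(n : ℤ), n + 1, 0]) : IsUnit (x 2) := by
  obtain ⟨c, hc⟩ := h.exists_apex_add_add_mul_eq_one
  obtain ⟨hu, hv⟩ := h.latticeLength_eq_one (latticeLength_normalEdge n)
  have hcu : IsCoprime (x 0 + n - (n + 1)) (x 2) := by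
    have := isCoprime_of_latticeLength_eq_one hu (s := c) (by
      simp only [Fin.isValue, cons_val_zero, cons_val_one, cons_val, zero_sub, mul_neg]
      linear_combination -hc)
    rw [show x 0 + (n : ℤ) - (n + 1) = x 0 - 1 by ring]
    simpa using this.neg_neg
  have hcv : IsCoprime (x 0 + n) (x 2) := by
    have := isCoprime_of_latticeLength_eq_one hv (s := c) (by
      simp only [Fin.isValue, cons_val_zero, cons_val_one, cons_val, zero_sub, mul_neg]
      linear_combination -hc)
    simpa using this.neg_neg
  by_contra hx
  obtain ⟨s, t, a, b, ha, hb, hab, hs, ht⟩ := exists_interior_latticePoint hcv hcu hx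
  -- `(s, t) ↦ (s - n, 1 - (s - n) - c t, t)` parametrises the lattice points of the plane
  -- through the triangle, sending `(0, 0), (n + 1, 0), (x₀ + n, x₂)` to `ρᵥ, ρᵤ, x`.
  apply h.no_interior_point ![s - n, 1 - (s - n) - c * t, t]
  refine ⟨b, a, 1 - a - b, hb, ha, by linarith, by ring, ?_⟩
  have hcR : (x 0 : ℝ) + x 1 + c * x 2 = 1 := by exact_mod_cast hc
  push_cast at hs
  ext i
  fin_cases i <;>
    simp only [toR3, Fin.isValue, Fin.zero_eta, Fin.mk_one, Fin.reduceFinMk, cons_val_zero,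
      cons_val_one, cons_val, Int.cast_sub, Int.cast_one, Int.cast_natCast, Int.cast_mul,
      Int.cast_neg, Int.cast_add, Int.cast_zero, Pi.add_apply, Pi.smul_apply, smul_eq_mul, mul_one,
      mul_zero, add_zero, mul_neg]
  · linear_combination hs
  · linear_combination -hs - (c : ℝ) * ht - b * hcR
  · exact ht

theorem AreAdjacentAnTriangles.apex_mul_apex_neg {n : ℕ} {ρ₀ ρ₁ : Fin 3 → ℤ}
    (h : AreAdjacentAnTriangles n ρ₀ ρ₁ ![1, 0, 0] ![-(n : ℤ), n + 1, 0]) : ρ₀ 2 * ρ₁ 2 < 0 := by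
  obtain ⟨φ, hu, hv, h₀, h₁⟩ := h.opposite_sides
  let e : Fin 3 → Fin 3 → ℝ := fun i j => if i = j then 1 else 0
  have hφ : ∀ x : Fin 3 → ℤ, φ (toR3 x) = x 0 * φ (e 0) + x 1 * φ (e 1) + x 2 * φ (e 2) := by
    intro x
    simp [LinearMap.pi_apply_eq_sum_univ φ (toR3 x), Fin.sum_univ_three, toR3, e]
  rw [hφ] at hu hv h₀ h₁
  simp only [Fin.isValue, cons_val_zero, cons_val_one, cons_val, Int.cast_one, Int.cast_zero,
    Int.cast_neg, Int.cast_natCast, Int.cast_add, one_mul, zero_mul, neg_mul, add_zero] at hu hv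
  rw [hu] at hv
  have he₁ : φ (e 1) = 0 :=
    (mul_eq_zero.mp (by linarith : ((n : ℝ) + 1) * φ (e 1) = 0)).resolve_left (by positivity)
  rw [hu, he₁] at h₀ h₁
  simp only [mul_zero, add_zero, zero_add] at h₀ h₁
  have : ((ρ₀ 2 * ρ₁ 2 : ℤ) : ℝ) * φ (e 2) ^ 2 < 0 := by
    push_cast
    nlinarith [mul_neg_of_neg_of_pos h₀ h₁]
  exact_mod_cast neg_of_mul_neg_left this (sq_nonneg _)

theorem exists_mulVec_eq_e₃_of_isUnit {x : Fin 3 → ℤ} (hx : IsUnit (x 2)) :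
    ∃ F : Matrix (Fin 3) (Fin 3) ℤ, IsUnit F.det ∧ F *ᵥ x = ![0, 0, 1] ∧
      (∀ y : Fin 3 → ℤ, y 2 = 0 → F *ᵥ y = y) ∧ ∀ y : Fin 3 → ℤ, (F *ᵥ y) 2 = x 2 * y 2 := by
  have hx2 : x 2 * x 2 = 1 := by rcases Int.isUnit_iff.mp hx with h | h <;> simp [h]
  refine ⟨!![1, 0, -(x 2 * x 0); 0, 1, -(x 2 * x 1); 0, 0, x 2], by simpa [det_fin_three] using hx,
    ?_, ?_, ?_⟩
  · ext i
    fin_cases i <;>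
      simp only [mulVec, dotProduct, Fin.sum_univ_three, Fin.isValue, Fin.zero_eta, Fin.mk_one,
        Fin.reduceFinMk, of_apply, cons_val', cons_val_fin_one, cons_val_zero, cons_val_one,
        cons_val, one_mul, zero_mul, add_zero, zero_add, neg_mul]
    · linear_combination -x 0 * hx2
    · linear_combination -x 1 * hx2
    · exact hx2
  · intro y hy
    ext i; fin_cases i <;> simp [mulVec, dotProduct, Fin.sum_univ_three, hy]
  · intro y; simp [mulVec, dotProduct, Fin.sum_univ_three]

theorem adjacent_An_triangles_normal_form_general
    (n : ℕ) (ρ₀ ρ₁ ρu ρv : Fin 3 → ℤ)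
    (h : AreAdjacentAnTriangles n ρ₀ ρ₁ ρu ρv) :
    ∃ g : Matrix (Fin 3) (Fin 3) ℤ, (g.det = 1 ∨ g.det = -1) ∧ ∃ a b : ℤ,
      g.mulVec ρ₀ = ![a, b, -1] ∧ g.mulVec ρ₁ = ![0, 0, 1] ∧
      g.mulVec ρu = ![1, 0, 0] ∧ g.mulVec ρv = ![-(n : ℤ), (n : ℤ) + 1, 0] := by
  obtain ⟨w, -, hwu, hwv⟩ := h.t₁.height_one
  obtain ⟨g, hg, hgu, hgv⟩ := exists_mulVec_eq_normalEdge h.common_edge_length hwu hwv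
  have hN := h.mulVec hg
  rw [hgu, hgv] at hN
  have hu₀ := hN.t₀.isUnit_apex
  have hu₁ := hN.t₁.isUnit_apex
  obtain ⟨F, hF, hFρ₁, hFfix, hF₂⟩ := exists_mulVec_eq_e₃_of_isUnit hu₁
  have hFρ₀ : (F *ᵥ (g *ᵥ ρ₀)) 2 = -1 := by
    rw [hF₂, mul_comm]
    exact (Int.isUnit_iff.mp (hu₀.mul hu₁)).resolve_left fun hone => by
      linarith [hN.apex_mul_apex_neg]
  refine ⟨F * g, Int.isUnit_iff.mp (by rw [det_mul]; exact hF.mul hg),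
    (F *ᵥ (g *ᵥ ρ₀)) 0, (F *ᵥ (g *ᵥ ρ₀)) 1, ?_, ?_, ?_, ?_⟩
  · rw [← mulVec_mulVec, ← hFρ₀]
    ext i; fin_cases i <;> rfl
  · rw [← mulVec_mulVec, hFρ₁]
  · rw [← mulVec_mulVec, hgu, hFfix _ rfl]
  · rw [← mulVec_mulVec, hgv, hFfix _ rfl]

/-- Two adjacent `Aₙ`-triangles can be put in normal form by a
`GL₃(ℤ)`-transformation: there are `g ∈ GL₃(ℤ)` and `a, b ∈ ℤ` with `g·ρ₀ = (a, b, −1)`,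
`g·ρ₁ = (0, 0, 1)`, `g·ρᵤ = (1, 0, 0)`, `g·ρᵥ = (−n, n+1, 0)`. -/
theorem adjacent_An_triangles_normal_form
    (n : ℕ) (hn : 1 ≤ n) (ρ₀ ρ₁ ρu ρv : Fin 3 → ℤ)
    (h : AreAdjacentAnTriangles n ρ₀ ρ₁ ρu ρv) :
    ∃ g : Matrix (Fin 3) (Fin 3) ℤ, (g.det = 1 ∨ g.det = -1) ∧ ∃ a b : ℤ,
      g.mulVec ρ₀ = ![a, b, -1] ∧ g.mulVec ρ₁ = ![0, 0, 1] ∧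
      g.mulVec ρu = ![1, 0, 0] ∧ g.mulVec ρv = ![-(n : ℤ), (n : ℤ) + 1, 0] :=
  adjacent_An_triangles_normal_form_general n ρ₀ ρ₁ ρu ρv h
end

section
/- Let n ≥ 1 be an integer and a, b ∈ ℤ, let M be the 3×4 integer matrix M = [[a, 0, 1, −n], [b, 0, 0, n+1], [−1, 1, 0, 0]], and let M^T : ℤ³ → ℤ⁴ be the ℤ-linear map given by the transpose of M. Then the cokernel ℤ⁴ / image(M^T) is isomorphic, as an abelian group, to ℤ ⊕ ℤ/rℤ, where r = gcd(n+1, b). -/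
/-!
Modulo the rows of `M`, the third row identifies `e₀` with `e₁` and the first eliminates `e₂`,
so the cokernel of `Mᵀ` is `ℤ² / ℤ (n + 1, b)`. For a nonzero `(p, q)` with `g = gcd p q`, a
unimodular change of basis of `ℤ²` built from a Bézout relation sends `(p, q)` to `(0, g)`, whence
`ℤ² / ℤ (p, q) ≅ ℤ × ℤ/gℤ`.
-/

open Matrix

namespace Int

/-- For `g = gcd p q = p x + q y`, the unimodular matrix `[[q/g, -p/g], [x, y]]` sends `(p, q)`
to `(0, g)`, so composing it with reduction mod `g` in the second coordinate kills exactly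
`ℤ ∙ (p, q)`. -/
noncomputable def spanPairQuotientMap (p q : ℤ) : ℤ × ℤ →ₗ[ℤ] ℤ × ZMod (gcd p q) :=
  ((q / gcd p q) • LinearMap.fst ℤ ℤ ℤ - (p / gcd p q) • LinearMap.snd ℤ ℤ ℤ).prod
    ((Int.castAddHom _).toIntLinearMap ∘ₗ
      (gcdA p q • LinearMap.fst ℤ ℤ ℤ + gcdB p q • LinearMap.snd ℤ ℤ ℤ))

theorem spanPairQuotientMap_apply (p q : ℤ) (u : ℤ × ℤ) :
    spanPairQuotientMap p q u =
      (q / gcd p q * u.1 - p / gcd p q * u.2, ((gcdA p q * u.1 + gcdB p q * u.2 : ℤ) : ZMod _)) :=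
  rfl

variable {p q : ℤ}

theorem div_gcd_mul_gcdA_add_div_gcd_mul_gcdB (h : p ≠ 0 ∨ q ≠ 0) :
    p / gcd p q * gcdA p q + q / gcd p q * gcdB p q = 1 := by
  have hg : (gcd p q : ℤ) ≠ 0 := by exact_mod_cast (gcd_pos_iff.2 h).ne'
  apply mul_left_cancel₀ hg
  rw [mul_add, ← mul_assoc, ← mul_assoc, Int.mul_ediv_cancel' (gcd_dvd_left ..),
    Int.mul_ediv_cancel' (gcd_dvd_right ..), mul_one, ← gcd_eq_gcd_ab]

theorem ker_spanPairQuotientMap (h : p ≠ 0 ∨ q ≠ 0) :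
    LinearMap.ker (spanPairQuotientMap p q) = ℤ ∙ (p, q) := by
  have hA : (gcd p q : ℤ) * (p / gcd p q) = p := Int.mul_ediv_cancel' (gcd_dvd_left ..)
  have hB : (gcd p q : ℤ) * (q / gcd p q) = q := Int.mul_ediv_cancel' (gcd_dvd_right ..)
  have hg : (gcd p q : ℤ) = p * gcdA p q + q * gcdB p q := gcd_eq_gcd_ab p q
  have hbez := div_gcd_mul_gcdA_add_div_gcd_mul_gcdB h
  ext ⟨s, t⟩
  simp only [LinearMap.mem_ker, spanPairQuotientMap_apply, Prod.mk_eq_zero,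
    ZMod.intCast_zmod_eq_zero_iff_dvd, Submodule.mem_span_singleton, Prod.smul_mk, smul_eq_mul,
    Prod.mk.injEq]
  constructor
  · rintro ⟨h₁, k, h₂⟩
    refine ⟨k, ?_, ?_⟩
    · linear_combination s * hbez - gcdB p q * h₁ - (p / gcd p q) * h₂ - k * hA
    · linear_combination t * hbez + gcdA p q * h₁ - (q / gcd p q) * h₂ - k * hB
  · rintro ⟨k, rfl, rfl⟩
    exact ⟨by linear_combination k * (p / gcd p q) * hB - k * (q / gcd p q) * hA,
      k, by linear_combination -k * hg⟩

theorem surjective_spanPairQuotientMap (h : p ≠ 0 ∨ q ≠ 0) :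
    Function.Surjective (spanPairQuotientMap p q) := by
  rintro ⟨s, t⟩
  obtain ⟨t, rfl⟩ := ZMod.intCast_surjective t
  have hbez := div_gcd_mul_gcdA_add_div_gcd_mul_gcdB h
  refine ⟨(gcdB p q * s + p / gcd p q * t, -gcdA p q * s + q / gcd p q * t), ?_⟩
  rw [spanPairQuotientMap_apply, Prod.mk.injEq]
  constructor
  · linear_combination s * hbez
  · congr 1
    linear_combination t * hbez

end Int

/-- Coordinates on `ℤ⁴` in which the three columns of `Mᵀ` become `0`, `(n + 1, b)` and `0`. -/
def rayCokernelCoords (n a : ℤ) : (Fin 4 → ℤ) →ₗ[ℤ] ℤ × ℤ where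
  toFun u := (n * u 2 + u 3, u 0 + u 1 - a * u 2)
  map_add' u v := by ext <;> simp only [Pi.add_apply, Prod.fst_add, Prod.snd_add] <;> ring
  map_smul' c u := by ext <;> simp only [Pi.smul_apply, Prod.smul_fst, Prod.smul_snd, smul_eq_mul,
    RingHom.id_apply] <;> ring

theorem rayCokernelCoords_apply (n a : ℤ) (u : Fin 4 → ℤ) :
    rayCokernelCoords n a u = (n * u 2 + u 3, u 0 + u 1 - a * u 2) :=
  rfl

theorem surjective_rayCokernelCoords (n a : ℤ) : Function.Surjective (rayCokernelCoords n a) :=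
  fun ⟨s, t⟩ ↦ ⟨![0, t, 0, s], by simp [rayCokernelCoords_apply]⟩

section RayMatrix

variable (n a b : ℤ)

theorem rayMatrix_transpose_mulVec (v : Fin 3 → ℤ) :
    (of ![![a, 0, 1, -n], ![b, 0, 0, n + 1], ![-1, 1, 0, 0]])ᵀ *ᵥ v =
      ![a * v 0 + b * v 1 - v 2, v 2, v 0, -n * v 0 + (n + 1) * v 1] := by
  ext i
  fin_cases i <;> simp [mulVec, dotProduct, Fin.sum_univ_succ]; ring

theorem range_rayMatrix_transpose :
    LinearMap.range (of ![![a, 0, 1, -n], ![b, 0, 0, n + 1], ![-1, 1, 0, 0]])ᵀ.mulVecLin =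
      (ℤ ∙ (n + 1, b)).comap (rayCokernelCoords n a) := by
  ext u
  simp only [LinearMap.mem_range, mulVecLin_apply, rayMatrix_transpose_mulVec,
    Submodule.mem_comap, rayCokernelCoords_apply, Submodule.mem_span_singleton, Prod.smul_mk,
    smul_eq_mul, Prod.mk.injEq]
  constructor
  · rintro ⟨v, rfl⟩
    refine ⟨v 1, ?_, ?_⟩ <;> simp only [cons_val_zero, cons_val_one, cons_val] <;> ring
  · rintro ⟨k, h₃, h₀⟩
    refine ⟨![u 2, k, u 1], ?_⟩
    ext i
    fin_cases i <;>
      simp only [Fin.zero_eta, Fin.mk_one, Fin.reduceFinMk, cons_val_zero, cons_val_one, cons_val] <;>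
      linarith

end RayMatrix

theorem ray_matrix_transpose_cokernel_general
    (n : ℕ) (a b : ℤ)
    (M : Matrix (Fin 3) (Fin 4) ℤ)
    (hM : M = Matrix.of ![![a, 0, 1, -(n : ℤ)], ![b, 0, 0, (n : ℤ) + 1], ![-1, 1, 0, 0]]) :
    Nonempty (((Fin 4 → ℤ) ⧸ LinearMap.range (Mᵀ.mulVecLin)) ≃+
      ℤ × ZMod (Int.gcd ((n : ℤ) + 1) b)) := by
  subst hM
  have hgcd : (n : ℤ) + 1 ≠ 0 ∨ b ≠ 0 := Or.inl (by omega)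
  let Ψ : (Fin 4 → ℤ) →ₗ[ℤ] ℤ × ZMod (Int.gcd ((n : ℤ) + 1) b) :=
    Int.spanPairQuotientMap ((n : ℤ) + 1) b ∘ₗ rayCokernelCoords n a
  have hker : (ℤ ∙ ((n : ℤ) + 1, b)).comap (rayCokernelCoords n a) = LinearMap.ker Ψ := by
    rw [LinearMap.ker_comp, Int.ker_spanPairQuotientMap hgcd]
  have hsurj : Function.Surjective Ψ :=
    (Int.surjective_spanPairQuotientMap hgcd).comp (surjective_rayCokernelCoords _ _)
  rw [range_rayMatrix_transpose, hker]
  exact ⟨(Ψ.quotKerEquivOfSurjective hsurj).toAddEquiv⟩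

/-- For the ray matrix `M = [[a,0,1,−n],[b,0,0,n+1],[−1,1,0,0]]` (`n ≥ 1`,
`a, b ∈ ℤ`), the cokernel `ℤ⁴ / im(Mᵀ)` of the transpose `Mᵀ : ℤ³ → ℤ⁴` is isomorphic, as an
abelian group, to `ℤ ⊕ ℤ/rℤ`, where `r = gcd(n+1, b)`. -/
theorem ray_matrix_transpose_cokernel
    (n : ℕ) (hn : 1 ≤ n) (a b : ℤ)
    (M : Matrix (Fin 3) (Fin 4) ℤ)
    (hM : M = Matrix.of ![![a, 0, 1, -(n : ℤ)], ![b, 0, 0, (n : ℤ) + 1], ![-1, 1, 0, 0]]) :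
    Nonempty (((Fin 4 → ℤ) ⧸ LinearMap.range (Mᵀ.mulVecLin)) ≃+
      ℤ × ZMod (Int.gcd ((n : ℤ) + 1) b)) :=
  ray_matrix_transpose_cokernel_general n a b M hM
end

section
/- Let P ⊆ ℝ³ be the convex hull of the five points ρ₀ = (0,0,1), ρ₁ = (0,1,−1), ρ_u = (0,1,0), ρ_v = (−2,−1,0), ξ = (1,0,0) of ℤ³. Then P is a reflexive polytope: the origin lies in the interior of P, and the dual polytope P* = { u ∈ ℝ³ : ⟨u, v⟩ ≥ −1 for all v ∈ P } is the convex hull of a finite set of points of ℤ³. -/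
/-!
The origin lies in the interior of the simplex on `ρ₀, ρ₁, ρ_v, ξ`, since its barycentric
coordinates there are all positive and depend continuously on the point.
The dual of a convex hull is cut out by one half-space per vertex, so `P*` is given by five
inequalities. They describe a prism over the lattice triangle with vertices `(±1, -1)`,
`(-1, 3)` in the first two coordinates, bounded by `u₂ = -1` below and `u₂ = u₁ + 1` above;
it is the convex hull of its six lattice vertices, since every point lies on a vertical
segment joining a point of the bottom triangle to a point of the top triangle.
-/

open Matrix

section ConvexHull

variable {E ι : Type*} [AddCommGroup E] [Module ℝ E] {s : Set E}

theorem smul_add_smul_add_smul_mem_convexHull {a b c : E}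
    (ha : a ∈ s) (hb : b ∈ s) (hc : c ∈ s) {α β γ : ℝ}
    (hα : 0 ≤ α) (hβ : 0 ≤ β) (hγ : 0 ≤ γ) (h : α + β + γ = 1) :
    α • a + β • b + γ • c ∈ convexHull ℝ s := by
  have := (convex_convexHull ℝ s).sum_mem (t := Finset.univ) (w := ![α, β, γ])
    (z := ![a, b, c]) (by simp [Fin.forall_fin_succ, hα, hβ, hγ])
    (by simpa [Fin.sum_univ_three] using h)
    (by simpa [Fin.forall_fin_succ] using
      ⟨subset_convexHull ℝ s ha, subset_convexHull ℝ s hb, subset_convexHull ℝ s hc⟩)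
  simpa [Fin.sum_univ_three] using this

theorem mem_interior_convexHull_of_continuous_weights [TopologicalSpace E] [Fintype ι]
    {z : ι → E} (hz : ∀ i, z i ∈ s) {w : ι → E → ℝ} (hw : ∀ i, Continuous (w i))
    (hsum : ∀ y, ∑ i, w i y = 1) (hcomb : ∀ y, ∑ i, w i y • z i = y) {x : E}
    (hx : ∀ i, 0 < w i x) : x ∈ interior (convexHull ℝ s) := by
  refine mem_interior.2 ⟨{y | ∀ i, 0 < w i y}, fun y hy => ?_, ?_, hx⟩
  · rw [← hcomb y]
    exact (convex_convexHull ℝ s).sum_mem (fun i _ => (hy i).le) (hsum y)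
      (fun i _ => subset_convexHull ℝ s (hz i))
  · rw [Set.ofPred_forall]
    exact isOpen_iInter_of_finite fun i => isOpen_lt continuous_const (hw i)

end ConvexHull

section PolarDual

variable {n : Type*} [Fintype n]

def polarDual (s : Set (n → ℝ)) : Set (n → ℝ) := {u | ∀ v ∈ s, -1 ≤ u ⬝ᵥ v}

theorem convex_polarDual (s : Set (n → ℝ)) : Convex ℝ (polarDual s) := by
  have : polarDual s = ⋂ v ∈ s, {u | -1 ≤ u ⬝ᵥ v} := by ext; simp [polarDual]
  rw [this]
  exact convex_iInter₂ fun v _ => convex_halfSpace_ge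
    ⟨fun a b => add_dotProduct a b v, fun c a => smul_dotProduct c a v⟩ _

theorem polarDual_convexHull (s : Set (n → ℝ)) :
    polarDual (convexHull ℝ s) = polarDual s := by
  refine subset_antisymm (fun u hu v hv => hu v (subset_convexHull ℝ s hv)) fun u hu => ?_
  exact convexHull_min hu (convex_halfSpace_ge
    ⟨fun a b => dotProduct_add u a b, fun c a => dotProduct_smul c u a⟩ _)

end PolarDual

theorem toR3_vec3 (a b c : ℤ) : toR3 ![a, b, c] = ![(a : ℝ), b, c] := by
  funext i; fin_cases i <;> rfl

def polytopeVertices : Set (Fin 3 → ℝ) :=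
  {![0, 0, 1], ![0, 1, -1], ![0, 1, 0], ![-2, -1, 0], ![1, 0, 0]}

def dualVertices : Finset (Fin 3 → ℤ) :=
  {![1, -1, -1], ![-1, -1, -1], ![-1, 3, -1], ![1, -1, 0], ![-1, -1, 0], ![-1, 3, 4]}

theorem image_toR3_dualVertices : toR3 '' ↑dualVertices =
    {![1, -1, -1], ![-1, -1, -1], ![-1, 3, -1], ![1, -1, 0], ![-1, -1, 0], ![-1, 3, 4]} := by
  simp [dualVertices, Set.image_insert_eq, toR3_vec3]

theorem zero_mem_interior_convexHull_polytopeVertices :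
    (0 : Fin 3 → ℝ) ∈ interior (convexHull ℝ polytopeVertices) := by
  refine mem_interior_convexHull_of_continuous_weights
    (z := ![![0, 0, 1], ![0, 1, -1], ![-2, -1, 0], ![1, 0, 0]])
    (w := ![fun u => (1 - u 0 + 3 * u 1 + 4 * u 2) / 5, fun u => (1 - u 0 + 3 * u 1 - u 2) / 5,
      fun u => (1 - u 0 - 2 * u 1 - u 2) / 5, fun u => (2 + 3 * u 0 - 4 * u 1 - 2 * u 2) / 5])
    ?_ ?_ ?_ ?_ ?_
  · intro i; fin_cases i <;> simp [polytopeVertices]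
  · intro i; fin_cases i <;> simp <;> fun_prop
  · intro y; simp [Fin.sum_univ_four]; ring
  · intro y; funext j; fin_cases j <;> simp [Fin.sum_univ_four] <;> ring
  · intro i; fin_cases i <;> norm_num

theorem mem_convexHull_dualVertices_of_mem_prism {u : Fin 3 → ℝ} (h0 : -1 ≤ u 0)
    (h1 : -1 ≤ u 1) (h01 : 2 * u 0 + u 1 ≤ 1) (h2 : -1 ≤ u 2) (h12 : u 2 ≤ u 1 + 1) :
    u ∈ convexHull ℝ (toR3 '' ↑dualVertices) := by
  have hα : 0 ≤ (u 0 + 1) / 2 := by linarith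
  have hβ : 0 ≤ (1 - 2 * u 0 - u 1) / 4 := by linarith
  have hγ : 0 ≤ (u 1 + 1) / 4 := by linarith
  have hsum : (u 0 + 1) / 2 + (1 - 2 * u 0 - u 1) / 4 + (u 1 + 1) / 4 = 1 := by ring
  have bottom : ![u 0, u 1, -1] ∈ convexHull ℝ (toR3 '' ↑dualVertices) := by
    convert smul_add_smul_add_smul_mem_convexHull (s := toR3 '' ↑dualVertices)
      (a := ![1, -1, -1]) (b := ![-1, -1, -1]) (c := ![-1, 3, -1])
      (by simp [image_toR3_dualVertices]) (by simp [image_toR3_dualVertices])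
      (by simp [image_toR3_dualVertices]) hα hβ hγ hsum using 1
    funext j; fin_cases j <;> simp <;> ring
  have top : ![u 0, u 1, u 1 + 1] ∈ convexHull ℝ (toR3 '' ↑dualVertices) := by
    convert smul_add_smul_add_smul_mem_convexHull (s := toR3 '' ↑dualVertices)
      (a := ![1, -1, 0]) (b := ![-1, -1, 0]) (c := ![-1, 3, 4])
      (by simp [image_toR3_dualVertices]) (by simp [image_toR3_dualVertices])
      (by simp [image_toR3_dualVertices]) hα hβ hγ hsum using 1
    funext j; fin_cases j <;> simp <;> ring
  have hpos : 0 < u 1 + 2 := by linarith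
  have ht : (u 2 + 1) / (u 1 + 2) ∈ Set.Icc (0 : ℝ) 1 :=
    ⟨div_nonneg (by linarith) hpos.le, (div_le_one hpos).2 (by linarith)⟩
  convert (convex_convexHull ℝ _).add_smul_sub_mem bottom top ht using 1
  funext j; fin_cases j <;> simp; field_simp; ring

theorem polarDual_polytopeVertices :
    polarDual polytopeVertices = convexHull ℝ (toR3 '' ↑dualVertices) := by
  refine subset_antisymm (fun u hu => ?_) (convexHull_min ?_ (convex_polarDual _))
  · simp [polarDual, polytopeVertices, dotProduct, Fin.sum_univ_three] at hu
    obtain ⟨h1, h2, h3, h4, h5⟩ := hu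
    exact mem_convexHull_dualVertices_of_mem_prism (by linarith) (by linarith) (by linarith)
      (by linarith) (by linarith)
  · rw [image_toR3_dualVertices]
    simp [Set.insert_subset_iff, polarDual, polytopeVertices, dotProduct, Fin.sum_univ_three]
    norm_num

/-- The convex hull `P` of `(0,0,1)`, `(0,1,−1)`, `(0,1,0)`, `(−2,−1,0)`,
`(1,0,0)` is a reflexive polytope: the origin is an interior point of `P` and the dual
polytope `P* = {u : ⟨u,v⟩ ≥ −1 ∀ v ∈ P}` is the convex hull of finitely many lattice
points. -/
theorem example_polytope_is_reflexive
    (P : Set (Fin 3 → ℝ))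
    (hP : P = convexHull ℝ
      {toR3 ![0, 0, 1], toR3 ![0, 1, -1], toR3 ![0, 1, 0], toR3 ![-2, -1, 0], toR3 ![1, 0, 0]}) :
    (0 : Fin 3 → ℝ) ∈ interior P ∧
    ∃ S : Finset (Fin 3 → ℤ),
      {u : Fin 3 → ℝ | ∀ v ∈ P, -1 ≤ u ⬝ᵥ v} = convexHull ℝ (toR3 '' ↑S) := by
  have hvertices : {toR3 ![0, 0, 1], toR3 ![0, 1, -1], toR3 ![0, 1, 0], toR3 ![-2, -1, 0],
      toR3 ![1, 0, 0]} = polytopeVertices := by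
    simp [polytopeVertices, toR3_vec3]
  subst hP
  rw [hvertices]
  exact ⟨zero_mem_interior_convexHull_polytopeVertices, dualVertices,
    (polarDual_convexHull _).trans polarDual_polytopeVertices⟩
end
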